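/- Let 0 < β < 1 < α, θ = -ln(β)/ln(α), and for k ∈ ℤ define D_k = ε·α^k + β^k. Then for any K ∈ ℤ, whenever 0 < ε ≤ θ/α^{K(1+θ)}, one has min_{k ≥ K} D_k ≤ max(√α, √(1/β)) · (θ^{1/(1+θ)} + (1/θ)^{1/(1+1/θ)}) · ε^{θ/(1+θ)}. -/

import Mathlib

open Real

theorem multi_scale_to_polynomial_bound
    (α β ε : ℝ) (hβ0 : 0 < β) (hβ1 : β < 1) (hα : 1 < α)
    (θ : ℝ) (hθ : θ = -Real.log β / Real.log α)
    (K : ℤ) (hε0 : 0 < ε) (hεK : ε ≤ θ / α ^ ((K : ℝ) * (1 + θ))) :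
    ∃ k : ℤ, K ≤ k ∧
      ε * α ^ k + β ^ k ≤
        max (Real.sqrt α) (Real.sqrt (1 / β)) *
          (θ ^ (1 / (1 + θ)) + (1 / θ) ^ (1 / (1 + 1 / θ))) *
          ε ^ (θ / (1 + θ)) := by
  have hα0 : (0:ℝ) < α := lt_trans one_pos hα
  have hLα : 0 < Real.log α := Real.log_pos hα
  have hLβ : Real.log β < 0 := Real.log_neg hβ0 hβ1
  have hθ0 : 0 < θ := by rw [hθ]; exact div_pos (by linarith) hLα
  have h1θ : (0:ℝ) < 1 + θ := by linarith
  have hθε : 0 < θ / ε := div_pos hθ0 hε0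
  set t : ℝ := Real.log (θ / ε) / ((1 + θ) * Real.log α) with ht
  have hKt : (K : ℝ) ≤ t := by
    have h1 : α ^ ((K : ℝ) * (1 + θ)) ≤ θ / ε := by
      have hpos : (0:ℝ) < α ^ ((K : ℝ) * (1 + θ)) := Real.rpow_pos_of_pos hα0 _
      rw [le_div_iff₀ hpos] at hεK
      rw [le_div_iff₀ hε0]
      linarith
    have h2 : (K : ℝ) * (1 + θ) * Real.log α ≤ Real.log (θ / ε) := by
      have := Real.log_le_log (Real.rpow_pos_of_pos hα0 _) h1
      rwa [Real.log_rpow hα0] at this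
    rw [ht, le_div_iff₀ (by positivity)]
    nlinarith
  refine ⟨⌊t + 1/2⌋, Int.le_floor.mpr (by push_cast; linarith), ?_⟩
  set k : ℤ := ⌊t + 1/2⌋ with hk
  have hk_le : (k:ℝ) ≤ t + 1/2 := Int.floor_le _
  have hk_ge : t - 1/2 ≤ (k:ℝ) := by
    have := Int.lt_floor_add_one (t + 1/2)
    push_cast at this ⊢
    linarith
  -- rewrite zpow as rpow
  rw [← Real.rpow_intCast α k, ← Real.rpow_intCast β k]
  -- value of α^t and β^t
  have hαt : α ^ t = (θ/ε) ^ ((1:ℝ)/(1+θ)) := by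
    rw [Real.rpow_def_of_pos hα0, Real.rpow_def_of_pos hθε]
    congr 1
    rw [ht]
    field_simp
  have hlogβ : Real.log β = -(θ * Real.log α) := by
    rw [hθ]; field_simp
  have hβt : β ^ t = (ε/θ) ^ (θ/(1+θ)) := by
    rw [Real.rpow_def_of_pos hβ0, Real.rpow_def_of_pos (div_pos hε0 hθ0)]
    congr 1
    rw [hlogβ, ht, Real.log_div hθ0.ne' hε0.ne', Real.log_div hε0.ne' hθ0.ne']
    field_simp
    ring
  -- the two equalities
  have hb : θ / (1 + θ) = 1 / (1 + 1/θ) := by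
    field_simp
    ring
  have hεA : ε * α ^ t = θ ^ ((1:ℝ)/(1+θ)) * ε ^ (θ/(1+θ)) := by
    rw [hαt, Real.div_rpow hθ0.le hε0.le]
    have h1 : ε ^ (θ/(1+θ)) = ε / ε ^ ((1:ℝ)/(1+θ)) := by
      rw [show θ/(1+θ) = 1 - 1/(1+θ) by field_simp; ring, Real.rpow_sub hε0, Real.rpow_one]
    rw [h1]
    field_simp
  have hεB : β ^ t = (1/θ) ^ ((1:ℝ)/(1+1/θ)) * ε ^ (θ/(1+θ)) := by
    rw [hβt, Real.div_rpow hε0.le hθ0.le, ← hb, one_div θ, Real.inv_rpow hθ0.le]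
    ring
  -- bounds
  have hsqα : Real.sqrt α = α ^ ((1:ℝ)/2) := Real.sqrt_eq_rpow α
  have hsqβ : Real.sqrt (1/β) = β ^ (-(1:ℝ)/2) := by
    rw [Real.sqrt_eq_rpow, one_div β, Real.inv_rpow hβ0.le, ← Real.rpow_neg hβ0.le]
    norm_num
  have hA : ε * α ^ ((k:ℝ)) ≤ Real.sqrt α * (ε * α ^ t) := by
    have h1 : α ^ ((k:ℝ)) ≤ α ^ (t + 1/2) :=
      Real.rpow_le_rpow_of_exponent_le hα.le hk_le
    have h2 : α ^ (t + 1/2) = α ^ t * α ^ ((1:ℝ)/2) := Real.rpow_add hα0 _ _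
    rw [hsqα]
    nlinarith [Real.rpow_pos_of_pos hα0 ((1:ℝ)/2), Real.rpow_pos_of_pos hα0 t]
  have hB : β ^ ((k:ℝ)) ≤ Real.sqrt (1/β) * β ^ t := by
    have h1 : β ^ ((k:ℝ)) ≤ β ^ (t - 1/2) :=
      Real.rpow_le_rpow_of_exponent_ge hβ0 hβ1.le hk_ge
    have h2 : β ^ (t - 1/2) = β ^ t * β ^ (-(1:ℝ)/2) := by
      rw [← Real.rpow_add hβ0]; ring_nf
    rw [hsqβ]
    nlinarith [h1, h2]
  have hM1 : Real.sqrt α ≤ max (Real.sqrt α) (Real.sqrt (1/β)) := le_max_left _ _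
  have hM2 : Real.sqrt (1/β) ≤ max (Real.sqrt α) (Real.sqrt (1/β)) := le_max_right _ _
  have hApos : 0 < ε * α ^ t := by positivity
  have hBpos : 0 < β ^ t := Real.rpow_pos_of_pos hβ0 t
  calc ε * α ^ ((k:ℝ)) + β ^ ((k:ℝ))
      ≤ Real.sqrt α * (ε * α ^ t) + Real.sqrt (1/β) * β ^ t := by linarith
    _ ≤ max (Real.sqrt α) (Real.sqrt (1/β)) * (ε * α ^ t)
        + max (Real.sqrt α) (Real.sqrt (1/β)) * β ^ t := by
        gcongr
    _ = max (Real.sqrt α) (Real.sqrt (1/β)) *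
          (θ ^ (1 / (1 + θ)) + (1 / θ) ^ (1 / (1 + 1 / θ))) *
          ε ^ (θ / (1 + θ)) := by
        rw [hεA, hεB]; ring
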